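/- The 1-sum of two HVGs is an HVG: if G ∈ 𝒢_N and H ∈ 𝒢_M, then G + H ∈ 𝒢_{N+M-1}, where G + H is obtained by identifying vertex N of G with vertex 1 of H (vertices of H shifted by N-1). Moreover, if G and H are both realizable by sequences with pairwise distinct entries, so is G + H. -/

import Mathlib

/-- The horizontal visibility graph of a data sequence `D : Fin N → ℝ`:
vertices `i ≠ j` are adjacent iff every entry strictly between them is
smaller than both `D i` and `D j`. -/
def HVG {N : ℕ} (D : Fin N → ℝ) : SimpleGraph (Fin N) where
  Adj i j := i ≠ j ∧ ∀ k : Fin N, min i j < k → k < max i j → D k < D i ∧ D k < D j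
  symm := by
    refine ⟨fun i j h => ?_⟩
    refine ⟨h.1.symm, fun k hk1 hk2 => ?_⟩
    rw [min_comm j i] at hk1
    rw [max_comm j i] at hk2
    exact (h.2 k hk1 hk2).symm
  loopless := by refine ⟨fun i h => ?_⟩; exact h.1 rfl

/-- The set of HVGs on `N` vertices (arbitrary non-negative data sequences). -/
def HVGs (N : ℕ) : Set (SimpleGraph (Fin N)) :=
  {G | ∃ D : Fin N → ℝ, (∀ i, 0 ≤ D i) ∧ HVG D = G}

/-- The set of HVGs on `N` vertices realizable by data sequences with pairwise
distinct entries. -/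
def HVGsDistinct (N : ℕ) : Set (SimpleGraph (Fin N)) :=
  {G | ∃ D : Fin N → ℝ, Function.Injective D ∧ HVG D = G}

/-- A vertex `i` is non-nested in `G` if there is no edge `uv` with `u < i < v`. -/
def Nonnested {N : ℕ} (G : SimpleGraph (Fin N)) (i : Fin N) : Prop :=
  ¬ ∃ u v : Fin N, u < i ∧ i < v ∧ G.Adj u v

/-- The 1-sum of a graph on `[N]` and a graph on `[M]`: identify vertex `N`
of the first with vertex `1` of the second (vertices of `H` shifted by `N-1`). -/
def oneSum (N M : ℕ) (hN : 1 ≤ N) (hM : 1 ≤ M)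
    (G : SimpleGraph (Fin N)) (H : SimpleGraph (Fin M)) :
    SimpleGraph (Fin (N + M - 1)) :=
  G.map (⟨fun i : Fin N => (⟨i.val, by have hi := i.isLt; omega⟩ : Fin (N + M - 1)),
      fun a b h => Fin.ext (congrArg (fun x : Fin (N + M - 1) => x.val) h)⟩ : Fin N ↪ Fin (N + M - 1)) ⊔
  H.map (⟨fun i : Fin M => (⟨i.val + (N - 1), by have hi := i.isLt; omega⟩ : Fin (N + M - 1)),
      fun a b h => by
        have h' : a.val + (N - 1) = b.val + (N - 1) :=
          congrArg (fun x : Fin (N + M - 1) => x.val) h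
        exact Fin.ext (by omega)⟩ : Fin M ↪ Fin (N + M - 1))

/-!
Horizontal visibility between two positions only depends on the relative order of the entries
between them. Take a realization of `G` whose last entry is a strict maximum, translate it below
all entries of a realization of `H`, and replace its last entry by the first entry of `H`. The
junction is then higher than everything to its left, so no edge passes over it, and the
concatenation realizes `G + H`; distinct entries stay distinct.
Every HVG has a realization ending in a strict maximum: if an interior vertex `w` carries a
maximum of `d₂, …, d_N`, no edge passes over `w`, so the graph is a 1-sum at `w` of two smaller
HVGs and the same gluing applies recursively; otherwise `d_N` exceeds every interior entry and
can just be raised above `d₁`. Nonnegativity comes for free by composing with `exp`.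
-/
open Set

/-- Ordered horizontal visibility for sequences indexed by `ℕ`, so that pieces can be shifted and
glued; a sequence `D : Fin N → ℝ` is read as `D ∘ Fin.val`. -/
def HVisible (D : ℕ → ℝ) (u v : ℕ) : Prop :=
  u < v ∧ ∀ k ∈ Ioo u v, D k < D u ∧ D k < D v

theorem SimpleGraph.ext_of_lt {α : Type*} [LinearOrder α] {G G' : SimpleGraph α}
    (h : ∀ i j, i < j → (G.Adj i j ↔ G'.Adj i j)) : G = G' := by
  ext i j
  rcases lt_trichotomy i j with hij | rfl | hij
  · exact h i j hij
  · simp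
  · rw [G.adj_comm, G'.adj_comm]
    exact h j i hij

theorem HVG_comp_strictMono {N : ℕ} {f : ℝ → ℝ} (hf : StrictMono f) (D : Fin N → ℝ) :
    HVG (f ∘ D) = HVG D := by
  ext i j
  simp only [HVG, Function.comp_apply, hf.lt_iff_lt]

theorem injective_comp_val_iff_injOn {N : ℕ} {D : ℕ → ℝ} :
    Function.Injective (D ∘ Fin.val : Fin N → ℝ) ↔ InjOn D (Iio N) :=
  ⟨fun h a ha b hb hab => congrArg Fin.val (@h ⟨a, ha⟩ ⟨b, hb⟩ hab),
    fun h a b hab => Fin.ext (h a.2 b.2 hab)⟩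

theorem hVisible_congr {D D' : ℕ → ℝ} {u v : ℕ}
    (h : ∀ k ∈ Ioo u v, ∀ j ∈ Icc u v, (D k < D j ↔ D' k < D' j)) :
    HVisible D u v ↔ HVisible D' u v :=
  and_congr_right fun huv => forall₂_congr fun k hk =>
    and_congr (h k hk u ⟨le_rfl, huv.le⟩) (h k hk v ⟨huv.le, le_rfl⟩)

theorem hVisible_shift (D : ℕ → ℝ) (w u v : ℕ) :
    HVisible (fun n => D (n + w)) u v ↔ HVisible D (u + w) (v + w) := by
  refine and_congr Nat.add_lt_add_iff_right.symm ⟨fun h k hk => ?_, fun h k hk => ?_⟩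
  · obtain ⟨k, rfl⟩ := Nat.exists_eq_add_of_le' (hk.1.le.trans' (Nat.le_add_left w u))
    exact h k ⟨by simpa using hk.1, by simpa using hk.2⟩
  · exact h (k + w) ⟨by simpa using hk.1, by simpa using hk.2⟩

theorem HVG_comp_val_adj_of_lt {N : ℕ} (D : ℕ → ℝ) {i j : Fin N} (hij : i < j) :
    (HVG (D ∘ Fin.val)).Adj i j ↔ HVisible D i j := by
  simp only [HVG, min_eq_left hij.le, max_eq_right hij.le, Function.comp_apply]
  refine and_congr (iff_of_true hij.ne hij) ⟨fun h k hk => ?_, fun h k hk1 hk2 => h k ⟨hk1, hk2⟩⟩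
  exact h ⟨k, hk.2.trans j.2⟩ hk.1 hk.2

theorem oneSum_adj {N M : ℕ} (hN : 1 ≤ N) (hM : 1 ≤ M) (G : SimpleGraph (Fin N))
    (H : SimpleGraph (Fin M)) (i j : Fin (N + M - 1)) :
    (oneSum N M hN hM G H).Adj i j ↔
      (∃ a b : Fin N, G.Adj a b ∧ (a : ℕ) = i ∧ (b : ℕ) = j) ∨
      (∃ a b : Fin M, H.Adj a b ∧ a + (N - 1) = i ∧ b + (N - 1) = j) := by
  simp only [oneSum, SimpleGraph.sup_adj, SimpleGraph.map_adj, Fin.ext_iff]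
  exact Iff.rfl

theorem oneSum_HVG_comp_val_adj_of_lt {N M : ℕ} (hN : 1 ≤ N) (hM : 1 ≤ M) (D E : ℕ → ℝ)
    {i j : Fin (N + M - 1)} (hij : i < j) :
    (oneSum N M hN hM (HVG (D ∘ Fin.val)) (HVG (E ∘ Fin.val))).Adj i j ↔
      (j ≤ N - 1 ∧ HVisible D i j) ∨
      (N - 1 ≤ i ∧ HVisible E (i - (N - 1)) (j - (N - 1))) := by
  rw [Fin.lt_def] at hij
  rw [oneSum_adj]
  refine or_congr ⟨?_, fun ⟨hj, hvis⟩ => ?_⟩ ⟨?_, fun ⟨hi, hvis⟩ => ?_⟩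
  · rintro ⟨a, b, hab, ha, hb⟩
    rw [HVG_comp_val_adj_of_lt D (Fin.lt_def.2 (by omega)), ha, hb] at hab
    exact ⟨by omega, hab⟩
  · refine ⟨⟨i, by omega⟩, ⟨j, by omega⟩, ?_, rfl, rfl⟩
    exact (HVG_comp_val_adj_of_lt (N := N) (i := ⟨i, _⟩) (j := ⟨j, _⟩) D hij).2 hvis
  · rintro ⟨a, b, hab, ha, hb⟩
    rw [HVG_comp_val_adj_of_lt E (Fin.lt_def.2 (by omega))] at hab
    refine ⟨by omega, ?_⟩
    rwa [← ha, ← hb, Nat.add_sub_cancel, Nat.add_sub_cancel]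
  · have hj := j.2
    refine ⟨⟨i - (N - 1), by omega⟩, ⟨j - (N - 1), by omega⟩, ?_, by simp; omega, by simp; omega⟩
    exact (HVG_comp_val_adj_of_lt E (Fin.lt_def.2 (by simp; omega))).2 hvis

/-- `c` is meant to be a lower bound of `R`: when `L w` is a strict maximum of `L`, the translated
entries of `L` before `w` then lie below every entry of the `R` part. -/
def glue (L R : ℕ → ℝ) (w : ℕ) (c : ℝ) (n : ℕ) : ℝ :=
  if n < w then L n - L w + c else R (n - w)

section glue

variable {L R : ℕ → ℝ} {w m : ℕ} {c : ℝ}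

theorem glue_of_lt {n : ℕ} (h : n < w) : glue L R w c n = L n - L w + c := if_pos h

theorem glue_of_le {n : ℕ} (h : w ≤ n) : glue L R w c n = R (n - w) := if_neg (not_lt.2 h)

theorem glue_lt_glue (hL : ∀ k < w, L k < L w) {a b : ℕ} (ha : a < w) (hb : w ≤ b)
    (hc : c ≤ R (b - w)) : glue L R w c a < glue L R w c b := by
  rw [glue_of_lt ha, glue_of_le hb]
  linarith [hL a ha]

theorem hVisible_glue (hL : ∀ k < w, L k < L w) (hc : c ≤ R 0) {u v : ℕ} :
    HVisible (glue L R w c) u v ↔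
      (v ≤ w ∧ HVisible L u v) ∨ (w ≤ u ∧ HVisible R (u - w) (v - w)) := by
  rcases le_or_gt v w with hv | hv
  · have hleft : HVisible (glue L R w c) u v ↔ HVisible L u v := by
      refine hVisible_congr fun k hk j hj => ?_
      have hkw : k < w := hk.2.trans_le hv
      rcases (hj.2.trans hv).lt_or_eq with hjw | rfl
      · rw [glue_of_lt hkw, glue_of_lt hjw, add_lt_add_iff_right, sub_lt_sub_iff_right]
      · exact iff_of_true (glue_lt_glue hL hkw le_rfl (by simpa using hc)) (hL k hkw)
    rw [hleft]
    exact ⟨fun h => .inl ⟨hv, h⟩, fun h => h.elim And.right fun h' => absurd h'.2.1 (by omega)⟩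
  rcases le_or_gt w u with hu | hu
  · have hright : (fun n => glue L R w c (n + w)) = R := by
      funext n
      rw [glue_of_le (Nat.le_add_left w n), Nat.add_sub_cancel]
    have hshift := hVisible_shift (glue L R w c) w (u - w) (v - w)
    rw [hright, Nat.sub_add_cancel hu, Nat.sub_add_cancel hv.le] at hshift
    rw [← hshift]
    exact ⟨fun h => .inr ⟨hu, h⟩, fun h => h.elim (fun h' => absurd h'.1 (by omega)) And.right⟩
  · refine iff_of_false (fun h => ?_) (by omega)
    exact (h.2 w ⟨hu, hv⟩).1.not_gt (glue_lt_glue hL hu le_rfl (by simpa using hc))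

theorem glue_lt_glue_add (hL : ∀ k < w, L k < L w) (hR : ∀ k < m, R k < R m) (hc : c ≤ R 0)
    {k : ℕ} (hk : k < w + m) : glue L R w c k < glue L R w c (w + m) := by
  rcases lt_or_ge k w with hkw | hkw
  · refine glue_lt_glue hL hkw (Nat.le_add_right w m) ?_
    rcases m.eq_zero_or_pos with rfl | hm
    · simpa using hc
    · simpa using hc.trans (hR 0 hm).le
  · rw [glue_of_le hkw, glue_of_le (Nat.le_add_right w m), Nat.add_sub_cancel_left]
    exact hR _ (by omega)

theorem glue_injOn (hL : ∀ k < w, L k < L w) (hc : ∀ j ≤ m, c ≤ R j)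
    (hLi : InjOn L (Iic w)) (hRi : InjOn R (Iic m)) : InjOn (glue L R w c) (Iic (w + m)) := by
  intro a ha b hb hab
  simp only [mem_Iic] at ha hb
  rcases lt_or_ge a w with haw | haw <;> rcases lt_or_ge b w with hbw | hbw
  · rw [glue_of_lt haw, glue_of_lt hbw, add_left_inj, sub_left_inj] at hab
    exact hLi (mem_Iic.2 haw.le) (mem_Iic.2 hbw.le) hab
  · exact absurd hab (glue_lt_glue hL haw hbw (hc _ (by omega))).ne
  · exact absurd hab (glue_lt_glue hL hbw haw (hc _ (by omega))).ne'
  · rw [glue_of_le haw, glue_of_le hbw] at hab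
    have := hRi (mem_Iic.2 (by omega : a - w ≤ m)) (mem_Iic.2 (by omega : b - w ≤ m)) hab
    omega

end glue

structure IsLastMaxRealization (n : ℕ) (D D' : ℕ → ℝ) : Prop where
  hVisible_iff : ∀ u v, v ≤ n → (HVisible D' u v ↔ HVisible D u v)
  lt_last : ∀ k < n, D' k < D' n
  injOn : InjOn D (Iic n) → InjOn D' (Iic n)

/-- An entry strictly between two positions is interior, hence already below `D n`; so raising
`D n` changes no visibility. -/
theorem isLastMaxRealization_update {n : ℕ} {D : ℕ → ℝ}
    (hD : ∀ t, 0 < t → t < n → D t < D n) :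
    IsLastMaxRealization n D (Function.update D n (max (D 0) (D n) + 1)) := by
  set D' := Function.update D n (max (D 0) (D n) + 1)
  have hD'_of_ne {k : ℕ} (hk : k ≠ n) : D' k = D k := Function.update_of_ne hk _ _
  have hlt_last : ∀ k < n, D' k < D' n := by
    intro k hk
    rw [hD'_of_ne hk.ne, show D' n = _ from Function.update_self ..]
    rcases k.eq_zero_or_pos with rfl | hk0
    · linarith [le_max_left (D 0) (D n)]
    · linarith [hD k hk0 hk, le_max_right (D 0) (D n)]
  refine ⟨fun u v hv => hVisible_congr fun k hk j hj => ?_, hlt_last, fun hinj a ha b hb hab => ?_⟩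
  · have hkn : k < n := hk.2.trans_le hv
    rw [hD'_of_ne hkn.ne]
    rcases eq_or_ne j n with rfl | hjn
    · exact iff_of_true (by simpa [hD'_of_ne hkn.ne] using hlt_last k hkn)
        (hD k (hk.1.trans_le' (Nat.zero_le u)) hkn)
    · rw [hD'_of_ne hjn]
  · simp only [mem_Iic] at ha hb
    rcases ha.lt_or_eq with ha | rfl <;> rcases hb.lt_or_eq with hb | rfl
    · rw [hD'_of_ne ha.ne, hD'_of_ne hb.ne] at hab
      exact hinj (mem_Iic.2 ha.le) (mem_Iic.2 hb.le) hab
    · exact absurd hab (hlt_last a ha).ne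
    · exact absurd hab (hlt_last b hb).ne'
    · rfl

theorem isLastMaxRealization_glue {n w : ℕ} {D L R : ℕ → ℝ} {c : ℝ} (hwn : w ≤ n)
    (hmax : ∀ t, 0 < t → t ≤ n → D t ≤ D w) (hL : IsLastMaxRealization w D L)
    (hR : IsLastMaxRealization (n - w) (fun k => D (k + w)) R) (hc : ∀ j ≤ n - w, c ≤ R j) :
    IsLastMaxRealization n D (glue L R w c) := by
  have hn : w + (n - w) = n := Nat.add_sub_cancel' hwn
  refine ⟨fun u v hv => ?_, fun k hk => ?_, fun hinj => ?_⟩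
  · rcases le_or_gt v u with hvu | huv
    · exact iff_of_false (fun h => hvu.not_gt h.1) (fun h => hvu.not_gt h.1)
    have hright (hu : w ≤ u) : HVisible R (u - w) (v - w) ↔ HVisible D u v := by
      rw [hR.hVisible_iff _ _ (by omega), hVisible_shift, Nat.sub_add_cancel hu,
        Nat.sub_add_cancel (hu.trans huv.le)]
    rw [hVisible_glue hL.lt_last (hc 0 (Nat.zero_le _)), and_congr_right (hL.hVisible_iff u v),
      and_congr_right hright, ← or_and_right, and_iff_right_of_imp]
    intro h
    by_contra! hcross
    exact (h.2 w ⟨by omega, by omega⟩).2.not_ge (hmax v (by omega) hv)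
  · rw [← hn]
    exact glue_lt_glue_add hL.lt_last hR.lt_last (hc 0 (Nat.zero_le _)) (by omega)
  · rw [← hn]
    refine glue_injOn hL.lt_last hc (hL.injOn (hinj.mono (Iic_subset_Iic.2 hwn))) (hR.injOn ?_)
    exact hinj.comp (add_left_injective w).injOn fun k hk => by simp at hk ⊢; omega

theorem exists_isLastMaxRealization (n : ℕ) (D : ℕ → ℝ) :
    ∃ D', IsLastMaxRealization n D D' := by
  induction n using Nat.strong_induction_on generalizing D with
  | _ n ih =>
  by_cases hsplit : ∃ w, 0 < w ∧ w < n ∧ ∀ t, 0 < t → t ≤ n → D t ≤ D w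
  · obtain ⟨w, hw0, hwn, hmax⟩ := hsplit
    obtain ⟨L, hL⟩ := ih w hwn D
    obtain ⟨R, hR⟩ := ih (n - w) (by omega) fun k => D (k + w)
    obtain ⟨c, hc⟩ := ((finite_Iic (n - w)).image R).bddBelow
    exact ⟨_, isLastMaxRealization_glue hwn.le hmax hL hR fun j hj => hc ⟨j, hj, rfl⟩⟩
  push Not at hsplit
  refine ⟨_, isLastMaxRealization_update fun t ht0 htn => ?_⟩
  obtain ⟨m, hm, hmax⟩ := (Finset.Icc 1 n).exists_max_image D
    ⟨t, Finset.mem_Icc.2 ⟨ht0, htn.le⟩⟩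
  simp only [Finset.mem_Icc] at hm hmax
  have hmn : m = n := by
    by_contra hmn
    obtain ⟨s, hs0, hsn, hs⟩ := hsplit m hm.1 (by omega)
    exact hs.not_ge (hmax s ⟨hs0, hsn⟩)
  subst hmn
  by_contra! hDt
  obtain ⟨s, hs0, hsn, hs⟩ := hsplit t ht0 htn
  exact hs.not_ge ((hmax s ⟨hs0, hsn⟩).trans hDt)

theorem exists_HVG_eq_oneSum {N M : ℕ} (hN : 1 ≤ N) (hM : 1 ≤ M) (D E : ℕ → ℝ) :
    ∃ F : ℕ → ℝ, HVG (F ∘ Fin.val) = oneSum N M hN hM (HVG (D ∘ Fin.val)) (HVG (E ∘ Fin.val)) ∧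
      (InjOn D (Iio N) → InjOn E (Iio M) → InjOn F (Iio (N + M - 1))) := by
  have hIio {K : ℕ} (hK : 1 ≤ K) : Iio K = Iic (K - 1) := by
    rw [← Iio_add_one_eq_Iic, Nat.sub_add_cancel hK]
  obtain ⟨L, hL⟩ := exists_isLastMaxRealization (N - 1) D
  obtain ⟨c, hc⟩ := ((finite_Iic (M - 1)).image E).bddBelow
  refine ⟨glue L E (N - 1) c, SimpleGraph.ext_of_lt fun i j hij => ?_, fun hD hE => ?_⟩
  · rw [HVG_comp_val_adj_of_lt _ hij, hVisible_glue hL.lt_last (hc ⟨0, Nat.zero_le _, rfl⟩),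
      oneSum_HVG_comp_val_adj_of_lt _ _ _ _ hij]
    exact or_congr_left (and_congr_right (hL.hVisible_iff i j))
  · rw [hIio hN] at hD
    rw [hIio hM] at hE
    rw [hIio (by omega), show N + M - 1 - 1 = N - 1 + (M - 1) by omega]
    exact glue_injOn hL.lt_last (fun j hj => hc ⟨j, hj, rfl⟩) (hL.injOn hD) hE

/-- the 1-sum of two HVGs is an HVG, and the 1-sum of two HVGs
realizable with pairwise distinct entries is again such. -/
theorem hvg_one_sum (N M : ℕ) (hN : 1 ≤ N) (hM : 1 ≤ M)
    (G : SimpleGraph (Fin N)) (H : SimpleGraph (Fin M)) :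
    (G ∈ HVGs N → H ∈ HVGs M → oneSum N M hN hM G H ∈ HVGs (N + M - 1)) ∧
    (G ∈ HVGsDistinct N → H ∈ HVGsDistinct M →
      oneSum N M hN hM G H ∈ HVGsDistinct (N + M - 1)) := by
  constructor
  · rintro ⟨D, -, rfl⟩ ⟨E, -, rfl⟩
    obtain ⟨D, rfl⟩ := Fin.val_injective.surjective_comp_right D
    obtain ⟨E, rfl⟩ := Fin.val_injective.surjective_comp_right E
    obtain ⟨F, hF, -⟩ := exists_HVG_eq_oneSum hN hM D E
    exact ⟨Real.exp ∘ F ∘ Fin.val, fun i => (Real.exp_pos _).le,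
      by rw [HVG_comp_strictMono Real.exp_strictMono, hF]⟩
  · rintro ⟨D, hD, rfl⟩ ⟨E, hE, rfl⟩
    obtain ⟨D, rfl⟩ := Fin.val_injective.surjective_comp_right D
    obtain ⟨E, rfl⟩ := Fin.val_injective.surjective_comp_right E
    obtain ⟨F, hF, hFinj⟩ := exists_HVG_eq_oneSum hN hM D E
    rw [injective_comp_val_iff_injOn] at hD hE
    exact ⟨F ∘ Fin.val, injective_comp_val_iff_injOn.2 (hFinj hD hE), hF⟩
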